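/- arXiv:2407.15881 — 5 statements merged into one kernel-verified Lean document; each statement's English description precedes it below -/
import Mathlib

section
/- For all t ≥ 0 and L > 0: ∫_{−∞}^{∞} (1/(L + x²))·(1/√(2π))·exp(−t·x²) dx = exp(L·t)·Erfc(√(L·t))·√(π/(2L)). -/
open Real MeasureTheory

noncomputable def Erfc (x : ℝ) : ℝ :=
  (2 / Real.sqrt Real.pi) * ∫ s in Set.Ioi x, Real.exp (-s ^ 2)

section aux
open Set Filter

lemma exp_int_aux {a : ℝ} (ha : 0 < a) :
    ∫ u in Set.Ioi (0:ℝ), Real.exp (-(a*u)) = 1/a := by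
  have h := integral_comp_mul_left_Ioi (fun y => Real.exp (-y)) 0 ha
  simp only [mul_zero, smul_eq_mul, integral_exp_neg_Ioi, neg_zero, Real.exp_zero, mul_one] at h
  rw [h, one_div]

lemma integrable_inv_L_add_sq {L : ℝ} (hL : 0 < L) :
    Integrable (fun x : ℝ => (L + x ^ 2)⁻¹) := by
  have hm : 0 < min L 1 := lt_min hL one_pos
  refine (integrable_inv_one_add_sq.const_mul (min L 1)⁻¹).mono' ?_ ?_
  · exact (measurable_const.add (measurable_id'.pow_const 2)).inv.aestronglyMeasurable
  · filter_upwards with x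
    have h1 : 0 < L + x ^ 2 := by positivity
    have h2 : min L 1 * (1 + x ^ 2) ≤ L + x ^ 2 := by
      have := min_le_left L 1; have := min_le_right L 1
      nlinarith [sq_nonneg x]
    rw [Real.norm_eq_abs, abs_of_nonneg (by positivity),
      show (min L 1)⁻¹ * (1 + x ^ 2)⁻¹ = (min L 1 * (1 + x ^ 2))⁻¹ by rw [mul_inv]]
    exact inv_anti₀ (by positivity) h2

lemma prod_integrable (t L : ℝ) (ht : 0 ≤ t) (hL : 0 < L) :
    Integrable (Function.uncurry fun (x u : ℝ) =>
      (1 / Real.sqrt (2 * Real.pi)) * Real.exp (-t * x ^ 2) * Real.exp (-((L + x ^ 2) * u)))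
      (volume.prod (volume.restrict (Ioi 0))) := by
  set c := 1 / Real.sqrt (2 * Real.pi) with hc
  have hc0 : 0 < c := by positivity
  rw [integrable_prod_iff]
  · constructor
    · filter_upwards with x
      have hb : 0 < L + x ^ 2 := by positivity
      have := (exp_neg_integrableOn_Ioi 0 hb).const_mul (c * Real.exp (-t * x ^ 2))
      exact this.congr (Filter.Eventually.of_forall fun u => by simp only [Function.uncurry_apply_pair, neg_mul, mul_assoc])
    · have key : ∀ x : ℝ, (∫ u in Ioi (0:ℝ),
          ‖c * Real.exp (-t * x ^ 2) * Real.exp (-((L + x ^ 2) * u))‖)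
          = c * Real.exp (-t * x ^ 2) * (L + x ^ 2)⁻¹ := by
        intro x
        have hb : 0 < L + x ^ 2 := by positivity
        have h1 : ∀ u : ℝ, ‖c * Real.exp (-t * x ^ 2) * Real.exp (-((L + x ^ 2) * u))‖
            = c * Real.exp (-t * x ^ 2) * Real.exp (-((L + x ^ 2) * u)) := by
          intro u; rw [Real.norm_eq_abs, abs_of_nonneg (by positivity)]
        simp_rw [h1]
        rw [integral_const_mul, exp_int_aux hb, one_div]
      have hint : Integrable (fun x : ℝ => c * Real.exp (-t * x ^ 2) * (L + x ^ 2)⁻¹) := by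
        refine ((integrable_inv_L_add_sq hL).const_mul c).mono' ?_ ?_
        · exact (((measurable_id'.pow_const 2).const_mul (-t)).exp.const_mul c).mul
            ((measurable_const.add (measurable_id'.pow_const 2)).inv) |>.aestronglyMeasurable
        · filter_upwards with x
          have hb : 0 < L + x ^ 2 := by positivity
          rw [Real.norm_eq_abs, abs_of_nonneg (by positivity)]
          have he : Real.exp (-t * x ^ 2) ≤ 1 := by
            rw [Real.exp_le_one_iff]; nlinarith [sq_nonneg x]
          calc c * Real.exp (-t * x ^ 2) * (L + x ^ 2)⁻¹
              ≤ c * 1 * (L + x ^ 2)⁻¹ := by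
                gcongr
            _ = c * (L + x ^ 2)⁻¹ := by ring
      exact hint.congr (Filter.Eventually.of_forall fun x => (key x).symm)
  · apply Continuous.aestronglyMeasurable
    fun_prop

lemma subst_lemma (t L : ℝ) (ht : 0 ≤ t) (hL : 0 < L) :
    ∫ u in Ioi (0:ℝ), Real.exp (-(L*u)) / Real.sqrt (u + t)
      = (2 / Real.sqrt L) * Real.exp (L*t) * ∫ s in Ioi (Real.sqrt (L*t)), Real.exp (-s^2) := by
  set a := Real.sqrt (L*t) with ha
  have ha0 : 0 ≤ a := Real.sqrt_nonneg _
  have ha2 : a ^ 2 = L * t := Real.sq_sqrt (by positivity)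
  set g : ℝ → ℝ := fun v => Real.exp (-(L*v)) / Real.sqrt (v + t) with hg
  set f : ℝ → ℝ := fun s => s^2/L - t with hf
  have hsL : 0 < Real.sqrt L := Real.sqrt_pos.mpr hL
  have hfc : ContinuousOn f (Ici a) := by
    apply Continuous.continuousOn; fun_prop
  have hft : Tendsto f atTop atTop := by
    apply tendsto_atTop_add_const_right
    exact (tendsto_pow_atTop (two_ne_zero)).atTop_div_const hL
  have hff' : ∀ s ∈ Ioi a, HasDerivWithinAt f (2*s/L) (Ioi s) s := by
    intro s hs
    have h := ((hasDerivAt_pow 2 s).div_const L).sub_const t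
    have : ((2:ℕ):ℝ) * s ^ (2-1) / L = 2*s/L := by norm_num
    rw [this] at h
    exact h.hasDerivWithinAt
  have hsub1 : f '' Ioi a ⊆ Ioi 0 := by
    rintro _ ⟨s, hs, rfl⟩
    rw [mem_Ioi] at hs ⊢
    have : a ^ 2 < s ^ 2 := by nlinarith
    rw [hf]; rw [ha2] at this
    have : 0 < s ^ 2 - L * t := by linarith
    rw [sub_pos, lt_div_iff₀ hL]
    linarith
  have hsub2 : f '' Ici a ⊆ Ici 0 := by
    rintro _ ⟨s, hs, rfl⟩
    rw [mem_Ici] at hs ⊢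
    have : a ^ 2 ≤ s ^ 2 := by nlinarith
    rw [ha2] at this
    rw [hf, sub_nonneg, le_div_iff₀ hL]
    linarith
  have hgcont : ContinuousOn g (Ioi 0) := by
    intro v hv
    rw [mem_Ioi] at hv
    have hvt : 0 < v + t := by linarith
    apply ContinuousAt.continuousWithinAt
    apply ContinuousAt.div
    · fun_prop
    · fun_prop
    · exact ne_of_gt (Real.sqrt_pos.mpr hvt)
  have hg1 : IntegrableOn g (Ici 0) := by
    rw [integrableOn_Ici_iff_integrableOn_Ioi]
    have base : IntegrableOn (fun v : ℝ => v ^ (-(1/2):ℝ) * Real.exp (-L * v ^ (1:ℝ))) (Ioi 0) :=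
      integrableOn_rpow_mul_exp_neg_mul_rpow (by norm_num) one_pos hL
    refine base.mono' ?_ ?_
    · apply Measurable.aestronglyMeasurable
      exact (Real.measurable_exp.comp ((measurable_id'.const_mul L).neg)).div
        (Real.continuous_sqrt.measurable.comp (measurable_id'.add_const t))
    · filter_upwards [ae_restrict_mem measurableSet_Ioi] with v hv
      rw [mem_Ioi] at hv
      have hvt : 0 < v + t := by linarith
      rw [Real.norm_eq_abs, abs_of_nonneg (by positivity), Real.rpow_one,
        Real.rpow_neg hv.le, ← Real.sqrt_eq_rpow, neg_mul]
      rw [hg]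
      simp only
      rw [div_eq_mul_inv, mul_comm]
      gcongr
      linarith
  have hEq : ∀ s ∈ Ioi a, (g ∘ f) s * (2*s/L) = (2 / Real.sqrt L) * Real.exp (L*t) * Real.exp (-s^2) := by
    intro s hs
    rw [mem_Ioi] at hs
    have hs0 : 0 < s := lt_of_le_of_lt ha0 hs
    have h1 : s^2/L - t + t = s^2/L := by ring
    have h2 : Real.sqrt (s^2/L) = s / Real.sqrt L := by
      rw [Real.sqrt_div (sq_nonneg s), Real.sqrt_sq hs0.le]
    have h3 : -(L * (s^2/L - t)) = -s^2 + L*t := by field_simp; ring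
    simp only [Function.comp_apply, hg, hf, h1, h2, h3, Real.exp_add]
    rw [div_div_eq_mul_div, div_mul_eq_mul_div]
    field_simp
    rw [Real.sq_sqrt hL.le]
  have main := integral_comp_mul_deriv_Ioi hfc hft hff'
    (hgcont.mono hsub1) (hg1.mono_set hsub2)
    (by
      rw [integrableOn_Ici_iff_integrableOn_Ioi]
      have gauss : Integrable (fun s : ℝ => (2 / Real.sqrt L) * Real.exp (L*t) * Real.exp (-s^2)) := by
        have := (integrable_exp_neg_mul_sq (one_pos)).const_mul ((2 / Real.sqrt L) * Real.exp (L*t))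
        simpa using this
      exact (gauss.integrableOn).congr_fun (fun s hs => (hEq s hs).symm) measurableSet_Ioi)
  have hfa : f a = 0 := by rw [hf]; simp only; rw [ha2]; field_simp; ring
  rw [hfa] at main
  rw [← main, setIntegral_congr_fun measurableSet_Ioi hEq, integral_const_mul]

end aux

open Set in
theorem stmt_3 (t L : ℝ) (ht : 0 ≤ t) (hL : 0 < L) :
    ∫ x : ℝ, (1 / (L + x ^ 2)) * (1 / Real.sqrt (2 * Real.pi)) * Real.exp (-t * x ^ 2) =
      Real.exp (L * t) * Erfc (Real.sqrt (L * t)) * Real.sqrt (Real.pi / (2 * L)) := by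
  set c := 1 / Real.sqrt (2 * Real.pi) with hc
  have hc0 : 0 < c := by positivity
  have h1 : ∀ x : ℝ, (1 / (L + x ^ 2)) * c * Real.exp (-t * x ^ 2)
      = ∫ u in Ioi (0:ℝ), c * Real.exp (-t * x ^ 2) * Real.exp (-((L + x ^ 2) * u)) := by
    intro x
    have hb : 0 < L + x ^ 2 := by positivity
    rw [integral_const_mul, exp_int_aux hb]
    ring
  simp_rw [h1]
  rw [integral_integral_swap (prod_integrable t L ht hL)]
  have h2 : ∀ u ∈ Ioi (0:ℝ), (∫ x : ℝ, c * Real.exp (-t * x ^ 2) * Real.exp (-((L + x ^ 2) * u)))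
      = (c * Real.sqrt Real.pi) * (Real.exp (-(L*u)) / Real.sqrt (u + t)) := by
    intro u hu
    rw [mem_Ioi] at hu
    have htu : 0 < t + u := by linarith
    have hx : ∀ x : ℝ, c * Real.exp (-t * x ^ 2) * Real.exp (-((L + x ^ 2) * u))
        = (c * Real.exp (-(L*u))) * Real.exp (-(t+u) * x ^ 2) := by
      intro x
      rw [mul_assoc, mul_assoc, ← Real.exp_add, ← Real.exp_add]
      congr 1
      ring
    simp_rw [hx]
    rw [integral_const_mul, integral_gaussian,
      Real.sqrt_div Real.pi_pos.le, show t + u = u + t by ring]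
    ring
  rw [setIntegral_congr_fun measurableSet_Ioi h2, integral_const_mul, subst_lemma t L ht hL]
  rw [Erfc]
  have hπ : 0 < Real.sqrt Real.pi := Real.sqrt_pos.mpr Real.pi_pos
  have h2' : Real.sqrt (2*Real.pi) = Real.sqrt 2 * Real.sqrt Real.pi := Real.sqrt_mul (by norm_num) _
  have h2L : Real.sqrt (Real.pi/(2*L)) = Real.sqrt Real.pi / (Real.sqrt 2 * Real.sqrt L) := by
    rw [Real.sqrt_div Real.pi_pos.le, Real.sqrt_mul (by norm_num)]
  have hsL : 0 < Real.sqrt L := Real.sqrt_pos.mpr hL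
  have hs2 : 0 < Real.sqrt 2 := by positivity
  rw [hc, h2', h2L]
  field_simp
end

section
/- For all t ≥ 0 and L > 0: ∫_{−∞}^{∞} (1/(L + x²)²)·(1/√(2π))·exp(−t·x²) dx = √(π/(2L))·(1/(2L) − t)·exp(L·t)·Erfc(√(L·t)) + √t/(√2·L). -/
open Real MeasureTheory Set Filter Topology Function

namespace Stmt4Aux

lemma aux_deriv (a : ℝ) (ha : 0 < a) (u : ℝ) :
    HasDerivAt (fun u : ℝ => -(u / a + 1 / a ^ 2) * Real.exp (-(a * u)))
      (u * Real.exp (-(a * u))) u := by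
  have h1 : HasDerivAt (fun u : ℝ => -(u / a + 1 / a ^ 2)) (-(1/a)) u := by
    have := (((hasDerivAt_id u).div_const a).add_const (1 / a ^ 2)).neg
    exact this
  have h2 : HasDerivAt (fun u : ℝ => Real.exp (-(a * u))) (-a * Real.exp (-(a * u))) u := by
    have := (((hasDerivAt_id u).const_mul a).neg).exp
    refine this.congr_deriv ?_
    show rexp (-(a * u)) * -(a * 1) = _; ring
  have := h1.mul h2
  refine this.congr_deriv ?_
  field_simp
  ring

lemma aux_cont (a : ℝ) : Continuous (fun u : ℝ => -(u / a + 1 / a ^ 2) * Real.exp (-(a * u))) := by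
  fun_prop

lemma aux_tendsto (a : ℝ) (ha : 0 < a) :
    Tendsto (fun u : ℝ => -(u / a + 1 / a ^ 2) * Real.exp (-(a * u))) atTop (𝓝 0) := by
  have h : Tendsto (fun u : ℝ => a * u) atTop atTop :=
    Tendsto.const_mul_atTop ha tendsto_id
  have h1 : Tendsto (fun u : ℝ => (a*u) * Real.exp (-(a*u))) atTop (𝓝 0) := by
    have := (tendsto_pow_mul_exp_neg_atTop_nhds_zero 1).comp h
    simpa [Function.comp_def] using this
  have h2 : Tendsto (fun u : ℝ => Real.exp (-(a*u))) atTop (𝓝 0) :=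
    tendsto_exp_neg_atTop_nhds_zero.comp h
  have key := (h1.const_mul (-(1/a^2))).add (h2.const_mul (-(1/a^2)))
  simp only [mul_zero, add_zero, zero_add] at key
  apply key.congr'
  filter_upwards with u
  field_simp
  ring

lemma integrableOn_mul_exp (a : ℝ) (ha : 0 < a) :
    IntegrableOn (fun u : ℝ => u * Real.exp (-(a * u))) (Ioi 0) :=
  integrableOn_Ioi_deriv_of_nonneg (aux_cont a).continuousWithinAt
    (fun u _ => aux_deriv a ha u)
    (fun u hu => mul_nonneg (le_of_lt hu) (Real.exp_pos _).le)
    (aux_tendsto a ha)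

lemma integral_mul_exp (a : ℝ) (ha : 0 < a) :
    ∫ u in Ioi (0:ℝ), u * Real.exp (-(a * u)) = 1 / a ^ 2 := by
  rw [integral_Ioi_of_hasDerivAt_of_nonneg (aux_cont a).continuousWithinAt
    (fun u _ => aux_deriv a ha u)
    (fun u hu => mul_nonneg (le_of_lt hu) (Real.exp_pos _).le)
    (aux_tendsto a ha)]
  simp

section
variable (t L : ℝ)

lemma G_contOn (ht : 0 ≤ t) :
    ContinuousOn (fun u : ℝ => u * Real.exp (-(L*u)) * Real.sqrt (π/(t+u))) (Ioi 0) := by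
  apply ContinuousOn.mul (by fun_prop)
  apply ContinuousOn.sqrt
  apply ContinuousOn.div continuousOn_const (by fun_prop)
  intro u hu
  have : 0 < t + u := by have := hu.out; linarith
  exact this.ne'

lemma G_integrable (ht : 0 ≤ t) (hL : 0 < L) :
    IntegrableOn (fun u : ℝ => u * Real.exp (-(L*u)) * Real.sqrt (π/(t+u))) (Ioi 0) := by
  have hmaj : Integrable (fun u : ℝ => Real.sqrt π * Real.exp (-(L*u)) +
      Real.sqrt π * (u * Real.exp (-(L*u)))) (volume.restrict (Ioi 0)) := by
    have hexp : IntegrableOn (fun u : ℝ => Real.exp (-(L*u))) (Ioi 0) := by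
      have := exp_neg_integrableOn_Ioi (0:ℝ) hL
      simpa [neg_mul] using this
    exact (hexp.const_mul _).add ((integrableOn_mul_exp L hL).const_mul _)
  refine Integrable.mono' hmaj ((G_contOn t L ht).aestronglyMeasurable measurableSet_Ioi) ?_
  filter_upwards [ae_restrict_mem measurableSet_Ioi] with u hu
  have hu0 : (0:ℝ) < u := hu
  have htu : 0 < t + u := by linarith
  rw [Real.norm_of_nonneg (by positivity)]
  have hsu : Real.sqrt u ≤ 1 + u := by
    calc Real.sqrt u ≤ Real.sqrt ((1+u)^2) := Real.sqrt_le_sqrt (by nlinarith)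
      _ = 1 + u := Real.sqrt_sq (by linarith)
  calc u * Real.exp (-(L*u)) * Real.sqrt (π/(t+u))
      ≤ u * Real.exp (-(L*u)) * Real.sqrt (π/u) := by
        gcongr
        · linarith
    _ = Real.sqrt π * (u / Real.sqrt u) * Real.exp (-(L*u)) := by
        rw [Real.sqrt_div pi_pos.le]; ring
    _ = Real.sqrt π * Real.sqrt u * Real.exp (-(L*u)) := by rw [Real.div_sqrt]
    _ ≤ Real.sqrt π * (1+u) * Real.exp (-(L*u)) := by gcongr
    _ = Real.sqrt π * Real.exp (-(L*u)) + Real.sqrt π * (u * Real.exp (-(L*u))) := by ring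

lemma fubini_step (ht : 0 ≤ t) (hL : 0 < L) :
    ∫ u in Ioi (0:ℝ), ∫ x : ℝ, u * Real.exp (-(L*u)) * Real.exp (-(t+u) * x^2) =
    ∫ x : ℝ, ∫ u in Ioi (0:ℝ), u * Real.exp (-(L*u)) * Real.exp (-(t+u) * x^2) := by
  apply integral_integral_swap
  have hmeas : AEStronglyMeasurable
      (uncurry fun u x : ℝ => u * Real.exp (-(L*u)) * Real.exp (-(t+u) * x^2))
      ((volume.restrict (Ioi 0)).prod volume) := by
    apply Continuous.aestronglyMeasurable
    fun_prop
  rw [integrable_prod_iff hmeas]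
  refine ⟨?_, ?_⟩
  · filter_upwards [ae_restrict_mem measurableSet_Ioi] with u hu
    have htu : 0 < t + u := by have := hu.out; linarith
    simp only [uncurry_apply_pair]
    exact (integrable_exp_neg_mul_sq htu).const_mul _
  · simp only [uncurry_apply_pair]
    apply (G_integrable t L ht hL).congr
    filter_upwards [ae_restrict_mem measurableSet_Ioi] with u hu
    have hu0 : (0:ℝ) < u := hu
    have htu : 0 < t + u := by linarith
    symm
    calc ∫ x : ℝ, ‖u * Real.exp (-(L*u)) * Real.exp (-(t+u) * x^2)‖
        = ∫ x : ℝ, u * Real.exp (-(L*u)) * Real.exp (-(t+u) * x^2) := by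
          congr 1; ext x; rw [Real.norm_of_nonneg (by positivity)]
      _ = (u * Real.exp (-(L*u))) * ∫ x : ℝ, Real.exp (-(t+u) * x^2) := integral_const_mul _ _
      _ = u * Real.exp (-(L*u)) * Real.sqrt (π/(t+u)) := by rw [integral_gaussian]

lemma inner_u (ht : 0 ≤ t) (hL : 0 < L) (x : ℝ) :
    ∫ u in Ioi (0:ℝ), u * Real.exp (-(L*u)) * Real.exp (-(t+u) * x^2) =
      1 / (L + x^2)^2 * Real.exp (-t * x^2) := by
  have hpos : 0 < L + x^2 := by positivity
  have : ∀ u : ℝ, u * Real.exp (-(L*u)) * Real.exp (-(t+u) * x^2) =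
      (u * Real.exp (-((L + x^2) * u))) * Real.exp (-t * x^2) := by
    intro u
    rw [mul_assoc, mul_assoc, ← Real.exp_add, ← Real.exp_add]
    ring_nf
  simp_rw [this]
  rw [integral_mul_const, integral_mul_exp _ hpos]

lemma inner_x (ht : 0 ≤ t) (hL : 0 < L) (u : ℝ) (hu : u ∈ Ioi (0:ℝ)) :
    ∫ x : ℝ, u * Real.exp (-(L*u)) * Real.exp (-(t+u) * x^2) =
      u * Real.exp (-(L*u)) * Real.sqrt (π/(t+u)) := by
  rw [integral_const_mul, integral_gaussian]

lemma sq_exp_integrable (hL : 0 < L) :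
    Integrable (fun v : ℝ => v^2 * Real.exp (-(L * v^2))) := by
  have := integrable_rpow_mul_exp_neg_mul_sq hL (show (-1:ℝ) < 2 by norm_num)
  simp_rw [rpow_two, neg_mul] at this ⊢
  exact this

lemma exp_sq_integrable (hL : 0 < L) :
    Integrable (fun v : ℝ => Real.exp (-(L * v^2))) := by
  have := integrable_exp_neg_mul_sq hL
  simp_rw [neg_mul] at this
  exact this

lemma tendsto_mul_exp_sq (hL : 0 < L) :
    Tendsto (fun v : ℝ => v * Real.exp (-(L * v^2))) atTop (𝓝 0) := by
  have h := rpow_mul_exp_neg_mul_sq_isLittleO_exp_neg hL 1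
  have h2 : Tendsto (fun v : ℝ => Real.exp (-(1/2 : ℝ) * v)) atTop (𝓝 0) := by
    have hh : Tendsto (fun v : ℝ => (1/2 : ℝ) * v) atTop atTop :=
      Tendsto.const_mul_atTop (by norm_num) tendsto_id
    have := tendsto_exp_neg_atTop_nhds_zero.comp hh
    apply this.congr
    intro v
    simp [Function.comp, neg_mul]
  have := h.isBigO.trans_tendsto h2
  apply this.congr'
  filter_upwards [eventually_gt_atTop (0:ℝ)] with v hv
  rw [Real.rpow_one, neg_mul]

lemma ftc_step (hL : 0 < L) (a : ℝ) :
    ∫ v in Ioi a, (v^2 * Real.exp (-(L * v^2)) - (1/(2*L)) * Real.exp (-(L * v^2))) =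
      a / (2*L) * Real.exp (-(L * a^2)) := by
  have hderiv : ∀ v : ℝ, HasDerivAt (fun v : ℝ => -(v/(2*L)) * Real.exp (-(L * v^2)))
      (v^2 * Real.exp (-(L * v^2)) - (1/(2*L)) * Real.exp (-(L * v^2))) v := by
    intro v
    have h1 : HasDerivAt (fun v : ℝ => -(v/(2*L))) (-(1/(2*L))) v := by
      exact ((hasDerivAt_id v).div_const (2*L)).neg
    have h2 : HasDerivAt (fun v : ℝ => Real.exp (-(L * v^2)))
        (-(L * (2 * v)) * Real.exp (-(L * v^2))) v := by
      have : HasDerivAt (fun v : ℝ => -(L * v^2)) (-(L * (2 * v))) v := by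
        exact (((hasDerivAt_pow 2 v).const_mul L).neg).congr_deriv (by simp)
      simpa [mul_comm] using this.exp
    have := h1.mul h2
    refine this.congr_deriv ?_
    field_simp
    ring
  have hint : IntegrableOn (fun v : ℝ =>
      v^2 * Real.exp (-(L * v^2)) - (1/(2*L)) * Real.exp (-(L * v^2))) (Ioi a) :=
    ((sq_exp_integrable L hL).sub ((exp_sq_integrable L hL).const_mul _)).integrableOn
  have htend : Tendsto (fun v : ℝ => -(v/(2*L)) * Real.exp (-(L * v^2))) atTop (𝓝 0) := by
    have := (tendsto_mul_exp_sq L hL).const_mul (-(1/(2*L)))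
    simp only [mul_zero] at this
    apply this.congr
    intro v; ring
  rw [integral_Ioi_of_hasDerivAt_of_tendsto' (fun v _ => hderiv v) hint htend]
  ring

lemma B_eval (ht : 0 ≤ t) (hL : 0 < L) :
    ∫ v in Ioi (Real.sqrt t), Real.exp (-(L * v^2)) =
      (Real.sqrt L)⁻¹ * ∫ s in Ioi (Real.sqrt (L*t)), Real.exp (-s^2) := by
  have hsL : 0 < Real.sqrt L := Real.sqrt_pos.2 hL
  have := integral_comp_mul_left_Ioi (fun s => Real.exp (-s^2)) (Real.sqrt t) hsL
  simp only [smul_eq_mul] at this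
  have heq : ∀ v : ℝ, Real.exp (-(L * v^2)) = Real.exp (-(Real.sqrt L * v)^2) := by
    intro v
    rw [mul_pow, Real.sq_sqrt hL.le]
  simp_rw [heq]
  rw [this, ← Real.sqrt_mul hL.le]

lemma Gval (ht : 0 ≤ t) (hL : 0 < L) {v : ℝ} (hv : Real.sqrt t < v) :
    (2*v) * ((v^2 - t) * Real.exp (-(L*(v^2 - t))) * Real.sqrt (π/(t+(v^2 - t)))) =
      2 * Real.sqrt π * Real.exp (L*t) * ((v^2 - t) * Real.exp (-(L * v^2))) := by
  have hv0 : 0 < v := lt_of_le_of_lt (Real.sqrt_nonneg t) hv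
  have h1 : t + (v^2 - t) = v^2 := by ring
  rw [h1, Real.sqrt_div pi_pos.le, Real.sqrt_sq hv0.le]
  have h2 : Real.exp (-(L*(v^2 - t))) = Real.exp (L*t) * Real.exp (-(L*v^2)) := by
    rw [← Real.exp_add]; ring_nf
  rw [h2]
  field_simp

lemma subst_step (ht : 0 ≤ t) (hL : 0 < L) :
    ∫ u in Ioi (0:ℝ), u * Real.exp (-(L*u)) * Real.sqrt (π/(t+u)) =
      ∫ v in Ioi (Real.sqrt t),
        2 * Real.sqrt π * Real.exp (L*t) * ((v^2 - t) * Real.exp (-(L * v^2))) := by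
  set G : ℝ → ℝ := fun u => u * Real.exp (-(L*u)) * Real.sqrt (π/(t+u)) with hG
  have himg1 : ∀ v ∈ Ioi (Real.sqrt t), (0:ℝ) < v^2 - t := by
    intro v hv
    have h := hv.out
    nlinarith [Real.sq_sqrt ht, Real.sqrt_nonneg t]
  have hf : ContinuousOn (fun v : ℝ => v^2 - t) (Ici (Real.sqrt t)) := by fun_prop
  have hft : Tendsto (fun v : ℝ => v^2 - t) atTop atTop := by
    have : Tendsto (fun v : ℝ => v^2 + (-t)) atTop atTop :=
      tendsto_atTop_add_const_right _ _ (tendsto_pow_atTop two_ne_zero)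
    simpa [sub_eq_add_neg] using this
  have hff' : ∀ v ∈ Ioi (Real.sqrt t),
      HasDerivWithinAt (fun v : ℝ => v^2 - t) (2*v) (Ioi v) v := by
    intro v _
    have : HasDerivAt (fun v : ℝ => v^2 - t) (2*v) v := by
      simpa using (hasDerivAt_pow 2 v).sub_const t
    exact this.hasDerivWithinAt
  have hgc : ContinuousOn G ((fun v : ℝ => v^2 - t) '' Ioi (Real.sqrt t)) := by
    apply (G_contOn t L ht).mono
    rintro _ ⟨v, hv, rfl⟩
    exact himg1 v hv
  have hg1 : IntegrableOn G ((fun v : ℝ => v^2 - t) '' Ici (Real.sqrt t)) := by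
    apply ((integrableOn_Ici_iff_integrableOn_Ioi).2 (G_integrable t L ht hL)).mono_set
    rintro _ ⟨v, hv, rfl⟩
    have h := hv.out
    simp only [mem_Ici]
    nlinarith [Real.sq_sqrt ht, Real.sqrt_nonneg t]
  have hg2 : IntegrableOn (fun v : ℝ => (2*v) • (G ∘ (fun v : ℝ => v^2 - t)) v)
      (Ici (Real.sqrt t)) := by
    rw [integrableOn_Ici_iff_integrableOn_Ioi]
    have hmaj : Integrable
        (fun v : ℝ => (2 * Real.sqrt π * Real.exp (L*t)) * (v^2 * Real.exp (-(L*v^2))))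
        (volume.restrict (Ioi (Real.sqrt t))) :=
      ((sq_exp_integrable L hL).const_mul _).integrableOn
    refine Integrable.mono' hmaj ?_ ?_
    · apply ContinuousOn.aestronglyMeasurable _ measurableSet_Ioi
      apply ContinuousOn.smul (f := fun v : ℝ => 2*v) (g := G ∘ fun v : ℝ => v^2 - t) (by fun_prop)
      apply (G_contOn t L ht).comp (by fun_prop)
      intro v hv
      exact himg1 v hv
    · filter_upwards [ae_restrict_mem measurableSet_Ioi] with v hv
      have hvt := hv.out
      have hv2 := himg1 v hv
      have hv0 : 0 < v := lt_of_le_of_lt (Real.sqrt_nonneg t) hvt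
      have hgv : (2*v) • (G ∘ (fun v : ℝ => v^2 - t)) v =
          2 * Real.sqrt π * Real.exp (L*t) * ((v^2 - t) * Real.exp (-(L * v^2))) := by
        simp only [Function.comp, smul_eq_mul, hG]
        exact Gval t L ht hL hvt
      rw [hgv, Real.norm_of_nonneg (by positivity)]
      have : (0:ℝ) < Real.exp (-(L*v^2)) := Real.exp_pos _
      gcongr
      linarith
  have key := integral_comp_smul_deriv_Ioi hf hft hff' hgc hg1 hg2
  beta_reduce at key
  rw [show Real.sqrt t ^ 2 - t = 0 by rw [Real.sq_sqrt ht]; ring] at key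
  rw [← key]
  apply setIntegral_congr_fun measurableSet_Ioi
  intro v hv
  simp only [Function.comp, smul_eq_mul, hG]
  exact Gval t L ht hL hv

end
end Stmt4Aux

open Stmt4Aux in
theorem stmt_4 (t L : ℝ) (ht : 0 ≤ t) (hL : 0 < L) :
    ∫ x : ℝ, (1 / (L + x ^ 2) ^ 2) * (1 / Real.sqrt (2 * Real.pi)) * Real.exp (-t * x ^ 2) =
      Real.sqrt (Real.pi / (2 * L)) * (1 / (2 * L) - t) * Real.exp (L * t) *
        Erfc (Real.sqrt (L * t)) + Real.sqrt t / (Real.sqrt 2 * L) := by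
  set c : ℝ := 1 / Real.sqrt (2 * π) with hc
  have hE : ∫ s in Ioi (Real.sqrt (L*t)), Real.exp (-s^2) =
      Real.sqrt π / 2 * Erfc (Real.sqrt (L*t)) := by
    rw [Erfc]
    have hpi : Real.sqrt π ≠ 0 := (Real.sqrt_pos.2 pi_pos).ne'
    field_simp
  have hI1 : IntegrableOn (fun v : ℝ =>
      v^2 * Real.exp (-(L * v^2)) - (1/(2*L)) * Real.exp (-(L * v^2))) (Ioi (Real.sqrt t)) :=
    ((sq_exp_integrable L hL).sub ((exp_sq_integrable L hL).const_mul _)).integrableOn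
  have hI2 : IntegrableOn (fun v : ℝ => (1/(2*L) - t) * Real.exp (-(L * v^2)))
      (Ioi (Real.sqrt t)) := ((exp_sq_integrable L hL).const_mul _).integrableOn
  have hIv : ∫ v in Ioi (Real.sqrt t), (v^2 - t) * Real.exp (-(L * v^2)) =
      Real.sqrt t / (2*L) * Real.exp (-(L * t)) +
      (1/(2*L) - t) * ((Real.sqrt L)⁻¹ * ∫ s in Ioi (Real.sqrt (L*t)), Real.exp (-s^2)) := by
    have hsplit : ∀ v : ℝ, (v^2 - t) * Real.exp (-(L * v^2)) =
        (v^2 * Real.exp (-(L * v^2)) - (1/(2*L)) * Real.exp (-(L * v^2))) +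
        (1/(2*L) - t) * Real.exp (-(L * v^2)) := by intro v; ring
    simp_rw [hsplit]
    rw [integral_add hI1 hI2, ftc_step L hL, integral_const_mul, B_eval t L ht hL,
      Real.sq_sqrt ht]
  calc ∫ x : ℝ, (1 / (L + x ^ 2) ^ 2) * c * Real.exp (-t * x ^ 2)
      = ∫ x : ℝ, c * (1 / (L + x ^ 2) ^ 2 * Real.exp (-t * x ^ 2)) := by
        congr 1; ext x; ring
    _ = c * ∫ x : ℝ, 1 / (L + x ^ 2) ^ 2 * Real.exp (-t * x ^ 2) := integral_const_mul _ _
    _ = c * ∫ x : ℝ, ∫ u in Ioi (0:ℝ), u * Real.exp (-(L*u)) * Real.exp (-(t+u) * x^2) := by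
        congr 1
        apply integral_congr_ae
        filter_upwards with x
        exact (inner_u t L ht hL x).symm
    _ = c * ∫ u in Ioi (0:ℝ), ∫ x : ℝ, u * Real.exp (-(L*u)) * Real.exp (-(t+u) * x^2) := by
        rw [← fubini_step t L ht hL]
    _ = c * ∫ u in Ioi (0:ℝ), u * Real.exp (-(L*u)) * Real.sqrt (π/(t+u)) := by
        rw [setIntegral_congr_fun measurableSet_Ioi (fun u hu => inner_x t L ht hL u hu)]
    _ = c * ∫ v in Ioi (Real.sqrt t),
          2 * Real.sqrt π * Real.exp (L*t) * ((v^2 - t) * Real.exp (-(L * v^2))) := by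
        rw [subst_step t L ht hL]
    _ = c * (2 * Real.sqrt π * Real.exp (L*t) *
          ∫ v in Ioi (Real.sqrt t), (v^2 - t) * Real.exp (-(L * v^2))) := by
        rw [integral_const_mul]
  rw [hIv, hE, hc]
  have h2 : Real.sqrt (2*π) = Real.sqrt 2 * Real.sqrt π := Real.sqrt_mul (by norm_num) π
  have h3 : Real.sqrt (π/(2*L)) = Real.sqrt π / (Real.sqrt 2 * Real.sqrt L) := by
    rw [Real.sqrt_div pi_pos.le, Real.sqrt_mul (by norm_num)]
  have hs2 : (0:ℝ) < Real.sqrt 2 := Real.sqrt_pos.2 (by norm_num)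
  have hsp : (0:ℝ) < Real.sqrt π := Real.sqrt_pos.2 pi_pos
  have hsL : (0:ℝ) < Real.sqrt L := Real.sqrt_pos.2 hL
  have hsp2 : Real.sqrt π * Real.sqrt π = π := Real.mul_self_sqrt pi_pos.le
  have hsL2 : Real.sqrt L * Real.sqrt L = L := Real.mul_self_sqrt hL.le
  have hs22 : Real.sqrt 2 * Real.sqrt 2 = 2 := Real.mul_self_sqrt (by norm_num)
  have hXY : Real.exp (L*t) * Real.exp (-(L*t)) = 1 := by
    rw [← Real.exp_add]; simp
  rw [h2, h3]
  field_simp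
  linear_combination (2 * Real.sqrt t * Real.sqrt L) * hXY
end

section
/- Let f, g : ℝ → ℝ be nonnegative even functions such that f is monotonically increasing on [0,∞), g is monotonically decreasing on [0,∞) with ∫_ℝ g(x) dx < ∞, and ∫_ℝ f(x−a)g(x) dx < ∞ for all a ∈ ℝ. Then for all a ∈ ℝ: ∫_ℝ f(x)g(x) dx ≤ ∫_ℝ f(x−a)g(x) dx. -/
open Real MeasureTheory

theorem stmt_5 (f g : ℝ → ℝ)
    (hf0 : ∀ x, 0 ≤ f x) (hg0 : ∀ x, 0 ≤ g x)
    (hfeven : ∀ x, f (-x) = f x) (hgeven : ∀ x, g (-x) = g x)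
    (hfmono : MonotoneOn f (Set.Ici (0 : ℝ)))
    (hganti : AntitoneOn g (Set.Ici (0 : ℝ)))
    (hgint : Integrable g)
    (hint : ∀ a : ℝ, Integrable (fun x => f (x - a) * g x))
    (a : ℝ) :
    ∫ x : ℝ, f x * g x ≤ ∫ x : ℝ, f (x - a) * g x := by
  -- f x = f |x|, g x = g |x|
  have hfabs : ∀ x : ℝ, f x = f |x| := by
    intro x
    rcases abs_choice x with h | h
    · rw [h]
    · rw [h, hfeven]
  have hgabs : ∀ x : ℝ, g x = g |x| := by
    intro x
    rcases abs_choice x with h | h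
    · rw [h]
    · rw [h, hgeven]
  -- measurability of f and g
  have hfm : Measurable f := by
    have h1 : Monotone (fun x : ℝ => f (max x 0)) := fun x y hxy =>
      hfmono (Set.mem_Ici.2 (le_max_right x 0)) (Set.mem_Ici.2 (le_max_right y 0))
        (max_le_max hxy le_rfl)
    have hfe : f = (fun x : ℝ => f (max x 0)) ∘ (fun x : ℝ => |x|) := by
      funext x
      simp only [Function.comp_apply, max_eq_left (abs_nonneg x)]
      exact hfabs x
    rw [hfe]
    exact h1.measurable.comp measurable_abs
  have hgm : Measurable g := by
    have h1 : Antitone (fun x : ℝ => g (max x 0)) := fun x y hxy =>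
      hganti (Set.mem_Ici.2 (le_max_right x 0)) (Set.mem_Ici.2 (le_max_right y 0))
        (max_le_max hxy le_rfl)
    have hge : g = (fun x : ℝ => g (max x 0)) ∘ (fun x : ℝ => |x|) := by
      funext x
      simp only [Function.comp_apply, max_eq_left (abs_nonneg x)]
      exact hgabs x
    rw [hge]
    exact h1.measurable.comp measurable_abs
  have hwm : Measurable (fun x : ℝ => ENNReal.ofReal (g x)) := hgm.ennreal_ofReal
  set μ : Measure ℝ := volume.withDensity (fun x => ENNReal.ofReal (g x)) with hμ
  have hμfin : IsFiniteMeasure μ := by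
    constructor
    rw [hμ, withDensity_apply _ MeasurableSet.univ, Measure.restrict_univ]
    calc ∫⁻ x, ENNReal.ofReal (g x) ≤ ∫⁻ x, (‖g x‖₊ : ENNReal) :=
          lintegral_mono fun x => Real.ofReal_le_enorm (g x)
      _ < ⊤ := hgint.hasFiniteIntegral
  have hμac : μ ≪ volume := withDensity_absolutelyContinuous _ _
  -- core: measure of shifted interval at most measure of centered interval
  have core : ∀ b r : ℝ, 0 ≤ r → μ (Set.Icc (b - r) (b + r)) ≤ μ (Set.Icc (-r) r) := by
    intro b r hr
    set A := Set.Icc (b - r) (b + r) with hA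
    set B := Set.Icc (-r) r with hB
    have hAm : MeasurableSet A := measurableSet_Icc
    have hBm : MeasurableSet B := measurableSet_Icc
    have hgleft : ∀ x ∈ A \ B, ENNReal.ofReal (g x) ≤ ENNReal.ofReal (g r) := by
      rintro x ⟨hxA, hxB⟩
      apply ENNReal.ofReal_le_ofReal
      have hrabs : r ≤ |x| := by
        have hx' : ¬(-r ≤ x ∧ x ≤ r) := by simpa [hB, Set.mem_Icc] using hxB
        rcases lt_or_ge x (-r) with h | h
        · calc r ≤ -x := by linarith
            _ ≤ |x| := neg_le_abs x
        · have hrx : r < x := by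
            by_contra h2
            push_neg at h2
            exact hx' ⟨h, h2⟩
          exact hrx.le.trans (le_abs_self x)
      rw [hgabs x]
      exact hganti (Set.mem_Ici.2 hr) (Set.mem_Ici.2 (hr.trans hrabs)) hrabs
    have hgright : ∀ x ∈ B \ A, ENNReal.ofReal (g r) ≤ ENNReal.ofReal (g x) := by
      rintro x ⟨hxB, _⟩
      apply ENNReal.ofReal_le_ofReal
      have : |x| ≤ r := abs_le.2 ⟨(Set.mem_Icc.1 hxB).1, (Set.mem_Icc.1 hxB).2⟩
      rw [hgabs x]
      exact hganti (Set.mem_Ici.2 (abs_nonneg x)) (Set.mem_Ici.2 hr) this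
    -- volumes of the two differences agree
    have hvolA : volume A = ENNReal.ofReal (2 * r) := by
      rw [hA, Real.volume_Icc]; ring_nf
    have hvolB : volume B = ENNReal.ofReal (2 * r) := by
      rw [hB, Real.volume_Icc]; ring_nf
    have hfinAB : volume (A ∩ B) ≠ ⊤ := by
      refine ne_top_of_le_ne_top ?_ (measure_mono Set.inter_subset_left)
      simp [hvolA, ENNReal.mul_eq_top]
    have hvd : volume (A \ B) = volume (B \ A) := by
      have h1 : volume (A ∩ B) + volume (A \ B) = volume A := measure_inter_add_diff A hBm
      have h2 : volume (B ∩ A) + volume (B \ A) = volume B := measure_inter_add_diff B hAm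
      rw [Set.inter_comm] at h2
      rw [hvolA] at h1; rw [hvolB] at h2
      have := h1.trans h2.symm
      exact (ENNReal.add_right_inj hfinAB).1 this
    have hdiff1 : μ (A \ B) ≤ ENNReal.ofReal (g r) * volume (A \ B) := by
      rw [hμ, withDensity_apply _ (hAm.diff hBm)]
      calc ∫⁻ x in A \ B, ENNReal.ofReal (g x)
          ≤ ∫⁻ _ in A \ B, ENNReal.ofReal (g r) :=
            setLIntegral_mono' (hAm.diff hBm) hgleft
        _ = ENNReal.ofReal (g r) * volume (A \ B) := setLIntegral_const _ _
    have hdiff2 : ENNReal.ofReal (g r) * volume (B \ A) ≤ μ (B \ A) := by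
      rw [hμ, withDensity_apply _ (hBm.diff hAm)]
      calc ENNReal.ofReal (g r) * volume (B \ A)
          = ∫⁻ _ in B \ A, ENNReal.ofReal (g r) := (setLIntegral_const _ _).symm
        _ ≤ ∫⁻ x in B \ A, ENNReal.ofReal (g x) :=
            setLIntegral_mono' (hBm.diff hAm) hgright
    have h1 : μ (A ∩ B) + μ (A \ B) = μ A := measure_inter_add_diff A hBm
    have h2 : μ (B ∩ A) + μ (B \ A) = μ B := measure_inter_add_diff B hAm
    rw [Set.inter_comm] at h2
    calc μ A = μ (A ∩ B) + μ (A \ B) := h1.symm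
      _ ≤ μ (A ∩ B) + μ (B \ A) := by
          refine add_le_add_right ?_ _
          calc μ (A \ B) ≤ ENNReal.ofReal (g r) * volume (A \ B) := hdiff1
            _ = ENNReal.ofReal (g r) * volume (B \ A) := by rw [hvd]
            _ ≤ μ (B \ A) := hdiff2
      _ = μ B := h2
  -- key per-level inequality
  have key : ∀ t : ℝ, μ {x : ℝ | t < f x} ≤ μ {x : ℝ | t < f (x - a)} := by
    intro t
    set S : Set ℝ := {x | f x ≤ t} with hS
    have hSm : MeasurableSet S := measurableSet_le hfm measurable_const
    have hsubm : Measurable (fun x : ℝ => x - a) := measurable_id.sub_const a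
    have hS'm : MeasurableSet ((fun x : ℝ => x - a) ⁻¹' S) := hSm.preimage hsubm
    have hc1 : {x : ℝ | t < f x} = Sᶜ := by
      ext x; simp [hS, not_le]
    have hc2 : {x : ℝ | t < f (x - a)} = ((fun x : ℝ => x - a) ⁻¹' S)ᶜ := by
      ext x; simp [hS, not_le]
    rw [hc1, hc2, measure_compl hSm (measure_ne_top μ _),
      measure_compl hS'm (measure_ne_top μ _)]
    refine tsub_le_tsub_left ?_ _
    -- goal: μ ((fun x => x - a) ⁻¹' S) ≤ μ S
    by_cases hne : ∃ x, 0 ≤ x ∧ f x ≤ t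
    · obtain ⟨x0, hx00, hx0t⟩ := hne
      by_cases hbd : BddAbove {x : ℝ | 0 ≤ x ∧ f x ≤ t}
      · set r := sSup {x : ℝ | 0 ≤ x ∧ f x ≤ t} with hr
        have hr0 : 0 ≤ r := hx00.trans (le_csSup hbd ⟨hx00, hx0t⟩)
        have hsub1 : S ⊆ Set.Icc (-r) r := by
          intro y hy
          have hyT : |y| ∈ {x : ℝ | 0 ≤ x ∧ f x ≤ t} :=
            ⟨abs_nonneg y, by rw [← hfabs y]; exact hy⟩
          have : |y| ≤ r := le_csSup hbd hyT
          exact Set.mem_Icc.2 (abs_le.1 this)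
        have hsub2 : Set.Ioo (-r) r ⊆ S := by
          intro y hy
          have hylt : |y| < r := abs_lt.2 ⟨hy.1, hy.2⟩
          obtain ⟨z, hzT, hz⟩ := exists_lt_of_lt_csSup
            (⟨x0, hx00, hx0t⟩ : Set.Nonempty {x : ℝ | 0 ≤ x ∧ f x ≤ t}) hylt
          show f y ≤ t
          calc f y = f |y| := hfabs y
            _ ≤ f z := hfmono (Set.mem_Ici.2 (abs_nonneg y)) (Set.mem_Ici.2 hzT.1) hz.le
            _ ≤ t := hzT.2
        have hpair' : ∀ u v : ℝ, μ ({u, v} : Set ℝ) = 0 := fun u v =>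
          hμac (Set.Finite.measure_zero (Set.toFinite _) volume)
        have hIcc_le : ∀ c d : ℝ, μ (Set.Icc c d) ≤ μ (Set.Ioo c d) := by
          intro c d
          have hsub : Set.Icc c d ⊆ Set.Ioo c d ∪ {c, d} := by
            intro x hx
            rcases eq_or_lt_of_le (Set.mem_Icc.1 hx).1 with h | h
            · exact Or.inr (Or.inl h.symm)
            rcases eq_or_lt_of_le (Set.mem_Icc.1 hx).2 with h' | h'
            · exact Or.inr (Or.inr h')
            · exact Or.inl ⟨h, h'⟩
          calc μ (Set.Icc c d) ≤ μ (Set.Ioo c d ∪ {c, d}) := measure_mono hsub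
            _ ≤ μ (Set.Ioo c d) + μ ({c, d} : Set ℝ) := measure_union_le _ _
            _ = μ (Set.Ioo c d) := by rw [hpair' c d, add_zero]
        have hpre : (fun x : ℝ => x - a) ⁻¹' S ⊆ Set.Icc (a - r) (a + r) := by
          intro x hx
          have hx' : -r ≤ x - a ∧ x - a ≤ r := Set.mem_Icc.1 (hsub1 hx)
          exact Set.mem_Icc.2 ⟨by linarith [hx'.1], by linarith [hx'.2]⟩
        have hpre2 : Set.Ioo (-r) r ⊆ S := hsub2
        calc μ ((fun x : ℝ => x - a) ⁻¹' S) ≤ μ (Set.Icc (a - r) (a + r)) := measure_mono hpre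
          _ ≤ μ (Set.Icc (-r) r) := core a r hr0
          _ ≤ μ (Set.Ioo (-r) r) := hIcc_le (-r) r
          _ ≤ μ S := measure_mono hpre2
      · -- S = univ
        have hSuniv : S = Set.univ := by
          ext y
          simp only [Set.mem_univ, iff_true, hS, Set.mem_setOf_eq]
          obtain ⟨z, hzT, hz⟩ := not_bddAbove_iff.1 hbd |y|
          calc f y = f |y| := hfabs y
            _ ≤ f z := hfmono (Set.mem_Ici.2 (abs_nonneg y)) (Set.mem_Ici.2 hzT.1) hz.le
            _ ≤ t := hzT.2
        rw [hSuniv]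
        simp
    · -- S = ∅
      have hSempty : S = ∅ := by
        ext x
        simp only [Set.mem_empty_iff_false, iff_false, hS, Set.mem_setOf_eq]
        intro hx
        exact hne ⟨|x|, abs_nonneg x, by rw [← hfabs x]; exact hx⟩
      rw [hSempty]
      simp
  -- layer cake
  have l1 : ∀ b : ℝ, ∫⁻ x, ENNReal.ofReal (f (x - b) * g x) =
      ∫⁻ t in Set.Ioi (0 : ℝ), μ {x : ℝ | t < f (x - b)} := by
    intro b
    have hfbm : Measurable (fun x : ℝ => f (x - b)) := hfm.comp (measurable_id.sub_const b)
    have step1 : ∫⁻ x, ENNReal.ofReal (f (x - b) * g x) =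
        ∫⁻ x, ENNReal.ofReal (f (x - b)) ∂μ := by
      rw [hμ, lintegral_withDensity_eq_lintegral_mul volume hwm hfbm.ennreal_ofReal]
      apply lintegral_congr
      intro x
      simp only [Pi.mul_apply]
      rw [ENNReal.ofReal_mul (hf0 _), mul_comm]
    rw [step1]
    exact lintegral_eq_lintegral_meas_lt μ (Filter.Eventually.of_forall fun x => hf0 _)
      hfbm.aemeasurable
  have main : ∫⁻ x, ENNReal.ofReal (f x * g x) ≤ ∫⁻ x, ENNReal.ofReal (f (x - a) * g x) := by
    have l0 : ∫⁻ x, ENNReal.ofReal (f x * g x) =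
        ∫⁻ t in Set.Ioi (0 : ℝ), μ {x : ℝ | t < f x} := by
      have := l1 0
      simpa using this
    rw [l0, l1 a]
    exact lintegral_mono fun t => key t
  -- back to Bochner integrals
  have hrhs_ne_top : ∫⁻ x, ENNReal.ofReal (f (x - a) * g x) ≠ ⊤ := by
    refine ne_top_of_le_ne_top ?_ (lintegral_mono fun x => Real.ofReal_le_enorm _)
    exact (hint a).hasFiniteIntegral.ne
  have e0 : ∫ x : ℝ, f x * g x = (∫⁻ x, ENNReal.ofReal (f x * g x)).toReal := by
    refine integral_eq_lintegral_of_nonneg_ae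
      (Filter.Eventually.of_forall fun x => mul_nonneg (hf0 x) (hg0 x)) ?_
    have := hint 0
    simpa using this.aestronglyMeasurable
  have ea : ∫ x : ℝ, f (x - a) * g x = (∫⁻ x, ENNReal.ofReal (f (x - a) * g x)).toReal := by
    exact integral_eq_lintegral_of_nonneg_ae
      (Filter.Eventually.of_forall fun x => mul_nonneg (hf0 _) (hg0 x))
      (hint a).aestronglyMeasurable
  rw [e0, ea]
  exact ENNReal.toReal_mono hrhs_ne_top main
end

section
/- Let n, T, σ, α be positive reals with T > 2n. Then E_{x∼N(0,1)}[ 1 / ( (T−2n)/(σ² + α²·(2σ²/n)·x²) + 2n/σ² ) ] = σ²/(2n) − (σ²/(4α²))·((T−2n)/n)/2 · exp(T/(8α²)) · Erfc(√(T/(8α²))) · √(π/(T/(2α²))). -/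
open Real MeasureTheory ProbabilityTheory

noncomputable def Jf (a : ℝ) : ℝ := ∫ t : ℝ, Real.exp (-(a ^ 2 / 2) * t ^ 2) / (1 + t ^ 2)

lemma Jf_integrand_integrable (a : ℝ) :
    Integrable (fun t : ℝ => Real.exp (-(a ^ 2 / 2) * t ^ 2) / (1 + t ^ 2)) := by
  refine integrable_inv_one_add_sq.mono' ?_ ?_
  · exact (Continuous.div (by continuity) (by continuity)
      (fun t => by positivity)).aestronglyMeasurable
  · refine Filter.Eventually.of_forall fun t => ?_
    have h1 : (0:ℝ) < 1 + t ^ 2 := by positivity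
    rw [Real.norm_eq_abs, abs_div, abs_of_pos (Real.exp_pos _), abs_of_pos h1]
    rw [div_le_iff₀ h1, inv_mul_cancel₀ h1.ne']
    exact Real.exp_le_one_iff.2 (by nlinarith [sq_nonneg (a*t)])

lemma Jf_continuous : Continuous Jf := by
  refine continuous_of_dominated (F := fun a t => Real.exp (-(a ^ 2 / 2) * t ^ 2) / (1 + t ^ 2))
    (bound := fun t => (1 + t ^ 2)⁻¹) ?_ ?_ integrable_inv_one_add_sq ?_
  · intro a
    exact (Continuous.div (by continuity) (by continuity)
      (fun t => by positivity)).aestronglyMeasurable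
  · intro a
    refine Filter.Eventually.of_forall fun t => ?_
    have h1 : (0:ℝ) < 1 + t ^ 2 := by positivity
    rw [Real.norm_eq_abs, abs_div, abs_of_pos (Real.exp_pos _), abs_of_pos h1]
    rw [div_le_iff₀ h1, inv_mul_cancel₀ h1.ne']
    exact Real.exp_le_one_iff.2 (by nlinarith [sq_nonneg (a*t)])
  · exact Filter.Eventually.of_forall fun t => by continuity

lemma Jf_zero : Jf 0 = Real.pi := by
  simp only [Jf]
  norm_num [one_div]
  try exact integral_univ_inv_one_add_sq

lemma Jf_hasDerivAt {a : ℝ} (ha : 0 < a) :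
    HasDerivAt Jf (a * Jf a - Real.sqrt (2 * Real.pi)) a := by
  have key := hasDerivAt_integral_of_dominated_loc_of_deriv_le (μ := volume)
    (F := fun x t => Real.exp (-(x ^ 2 / 2) * t ^ 2) / (1 + t ^ 2))
    (F' := fun x t => (-(x * t ^ 2)) * Real.exp (-(x ^ 2 / 2) * t ^ 2) / (1 + t ^ 2))
    (x₀ := a) (bound := fun t => (3 * a / 2) * (16 / a ^ 2) * Real.exp (-(a ^ 2 / 16) * t ^ 2))
    (Metric.ball_mem_nhds a (half_pos ha))
    (Filter.Eventually.of_forall fun x =>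
      (Continuous.div (by continuity) (by continuity) (fun t => by positivity)).aestronglyMeasurable)
    (Jf_integrand_integrable a)
    ((Continuous.div (by continuity) (by continuity) (fun t => by positivity)).aestronglyMeasurable)
    ?_ ?_ ?_
  · have h2 := key.2
    have heq : (∫ t : ℝ, (-(a * t ^ 2)) * Real.exp (-(a ^ 2 / 2) * t ^ 2) / (1 + t ^ 2))
        = a * Jf a - Real.sqrt (2 * Real.pi) := by
      have hsp : ∀ t : ℝ, (-(a * t ^ 2)) * Real.exp (-(a ^ 2 / 2) * t ^ 2) / (1 + t ^ 2)
          = a * (Real.exp (-(a ^ 2 / 2) * t ^ 2) / (1 + t ^ 2))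
            - a * Real.exp (-(a ^ 2 / 2) * t ^ 2) := by
        intro t
        have h1 : (1:ℝ) + t ^ 2 ≠ 0 := by positivity
        field_simp
        ring
      simp_rw [hsp]
      rw [integral_sub ((Jf_integrand_integrable a).const_mul a)
        ((integrable_exp_neg_mul_sq (by positivity : (0:ℝ) < a ^ 2 / 2)).const_mul a),
        integral_const_mul, integral_const_mul, integral_gaussian]
      have hs : a * Real.sqrt (Real.pi / (a ^ 2 / 2)) = Real.sqrt (2 * Real.pi) := by
        rw [← Real.sqrt_sq ha.le, ← Real.sqrt_mul (sq_nonneg a)]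
        rw [Real.sqrt_sq ha.le]
        congr 1
        field_simp
      rw [hs, Jf]
    rwa [heq] at h2
  · refine Filter.Eventually.of_forall fun t => ?_
    intro x hx
    rw [Metric.mem_ball, Real.dist_eq] at hx
    have hx1 : a / 2 < x := by cases abs_lt.mp hx; linarith
    have hx2 : x < 3 * a / 2 := by cases abs_lt.mp hx; linarith
    have hxpos : 0 < x := lt_trans (half_pos ha) hx1
    have h1 : (0:ℝ) < 1 + t ^ 2 := by positivity
    rw [Real.norm_eq_abs, abs_div, abs_of_pos h1, abs_mul, abs_neg, abs_mul,
      abs_of_pos (Real.exp_pos _), abs_of_pos hxpos, abs_of_nonneg (sq_nonneg t)]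
    have hb1 : x * t ^ 2 * Real.exp (-(x ^ 2 / 2) * t ^ 2) / (1 + t ^ 2)
        ≤ x * t ^ 2 * Real.exp (-(x ^ 2 / 2) * t ^ 2) := by
      rw [div_le_iff₀ h1]
      nlinarith [mul_nonneg (mul_nonneg hxpos.le (sq_nonneg t)) (Real.exp_pos (-(x ^ 2 / 2) * t ^ 2)).le, sq_nonneg t]
    refine hb1.trans ?_
    have hexp : Real.exp (-(x ^ 2 / 2) * t ^ 2) ≤ Real.exp (-(a ^ 2 / 8) * t ^ 2) := by
      apply Real.exp_le_exp.2
      have hxsq : a ^ 2 / 4 ≤ x ^ 2 := by nlinarith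
      nlinarith [mul_nonneg (by linarith : (0:ℝ) ≤ x ^ 2 / 2 - a ^ 2 / 8) (sq_nonneg t)]
    have hsplit : Real.exp (-(a ^ 2 / 8) * t ^ 2)
        = Real.exp (-(a ^ 2 / 16) * t ^ 2) * Real.exp (-(a ^ 2 / 16) * t ^ 2) := by
      rw [← Real.exp_add]; ring_nf
    have ht2 : t ^ 2 * Real.exp (-(a ^ 2 / 16) * t ^ 2) ≤ 16 / a ^ 2 := by
      have hE : Real.exp (-(a ^ 2 / 16) * t ^ 2) = (Real.exp (a ^ 2 / 16 * t ^ 2))⁻¹ := by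
        rw [← Real.exp_neg]
        ring_nf
      rw [hE, mul_inv_le_iff₀ (Real.exp_pos _)]
      have hey : a ^ 2 / 16 * t ^ 2 + 1 ≤ Real.exp (a ^ 2 / 16 * t ^ 2) :=
        Real.add_one_le_exp _
      have h16 : (0:ℝ) < 16 / a ^ 2 := by positivity
      calc t ^ 2 = 16 / a ^ 2 * (a ^ 2 / 16 * t ^ 2) := by field_simp
        _ ≤ 16 / a ^ 2 * Real.exp (a ^ 2 / 16 * t ^ 2) := by
            apply mul_le_mul_of_nonneg_left _ h16.le
            linarith
    calc x * t ^ 2 * Real.exp (-(x ^ 2 / 2) * t ^ 2)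
        ≤ x * t ^ 2 * Real.exp (-(a ^ 2 / 8) * t ^ 2) := by
          apply mul_le_mul_of_nonneg_left hexp
          positivity
      _ = x * (t ^ 2 * Real.exp (-(a ^ 2 / 16) * t ^ 2)) * Real.exp (-(a ^ 2 / 16) * t ^ 2) := by
          rw [hsplit]; ring
      _ ≤ 3 * a / 2 * (16 / a ^ 2) * Real.exp (-(a ^ 2 / 16) * t ^ 2) := by
          apply mul_le_mul_of_nonneg_right _ (Real.exp_pos _).le
          apply mul_le_mul hx2.le ht2 (by positivity) (by linarith)
  · exact ((integrable_exp_neg_mul_sq (by positivity : (0:ℝ) < a ^ 2 / 16)).const_mul _)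
  · refine Filter.Eventually.of_forall fun t => ?_
    intro x hx
    have hinner : HasDerivAt (fun x : ℝ => -(x ^ 2 / 2) * t ^ 2) (-(x * t ^ 2)) x := by
      have := (((hasDerivAt_pow 2 x).div_const 2).fun_neg).mul_const (t ^ 2)
      refine this.congr_deriv ?_
      ring
    refine (hinner.exp.div_const (1 + t ^ 2)).congr_deriv ?_
    ring

lemma exp_neg_sq_integrable : Integrable (fun s : ℝ => Real.exp (-s ^ 2)) := by
  have := integrable_exp_neg_mul_sq (zero_lt_one (α := ℝ))
  simpa using this

lemma Jf_eq {a : ℝ} (ha : 0 ≤ a) :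
    Jf a = Real.pi * Real.exp (a ^ 2 / 2) * Erfc (a / Real.sqrt 2) := by
  -- FTC step
  have hderiv : ∀ x ∈ Set.Ioo 0 a,
      HasDerivAt (fun x : ℝ => Real.exp (-(x ^ 2 / 2)) * Jf x)
        (-Real.sqrt (2 * Real.pi) * Real.exp (-(x ^ 2 / 2))) x := by
    intro x hx
    have h1 : HasDerivAt (fun x : ℝ => Real.exp (-(x ^ 2 / 2))) (-x * Real.exp (-(x ^ 2 / 2))) x := by
      have hin : HasDerivAt (fun x : ℝ => -(x ^ 2 / 2)) (-x) x := by
        have := ((hasDerivAt_pow 2 x).div_const 2).fun_neg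
        refine this.congr_deriv ?_
        ring
      convert hin.exp using 1
      ring
    have h2 := h1.fun_mul (Jf_hasDerivAt hx.1)
    refine h2.congr_deriv ?_
    ring
  have hcont : Continuous (fun x : ℝ => Real.exp (-(x ^ 2 / 2)) * Jf x) :=
    (Real.continuous_exp.comp (by continuity)).mul Jf_continuous
  have hftc : ∫ s in (0:ℝ)..a, (-Real.sqrt (2 * Real.pi) * Real.exp (-(s ^ 2 / 2)))
      = Real.exp (-(a ^ 2 / 2)) * Jf a - Real.exp (-(0 ^ 2 / 2)) * Jf 0 := by
    apply intervalIntegral.integral_eq_sub_of_hasDeriv_right_of_le ha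
      hcont.continuousOn
      (fun x hx => (hderiv x hx).hasDerivWithinAt)
      ((Continuous.intervalIntegrable (by continuity) _ _))
  rw [Jf_zero] at hftc
  norm_num at hftc
  -- substitution in the interval integral
  set b := a / Real.sqrt 2 with hb_def
  have hs2 : (0:ℝ) < Real.sqrt 2 := Real.sqrt_pos.2 (by norm_num)
  have hb : 0 ≤ b := div_nonneg ha hs2.le
  have hsub : ∫ s in (0:ℝ)..a, Real.exp (-(s ^ 2 / 2))
      = Real.sqrt 2 * ∫ u in (0:ℝ)..b, Real.exp (-u ^ 2) := by
    have := intervalIntegral.integral_comp_mul_left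
      (f := fun s : ℝ => Real.exp (-(s ^ 2 / 2))) (a := (0:ℝ)) (b := b)
      (c := Real.sqrt 2) hs2.ne'
    have hsb : Real.sqrt 2 * b = a := by
      rw [hb_def, mul_div_cancel₀ _ hs2.ne']
    rw [mul_zero, hsb] at this
    have heq : ∀ u : ℝ, Real.exp (-((Real.sqrt 2 * u) ^ 2 / 2)) = Real.exp (-u ^ 2) := by
      intro u
      congr 1
      rw [mul_pow, Real.sq_sqrt (by norm_num : (0:ℝ) ≤ 2)]
      ring
    simp_rw [heq] at this
    rw [this, smul_eq_mul, ← mul_assoc, mul_inv_cancel₀ hs2.ne', one_mul]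
  -- the Erfc side
  have hIoi : ∫ s in Set.Ioi b, Real.exp (-s ^ 2)
      = Real.sqrt Real.pi / 2 - ∫ u in (0:ℝ)..b, Real.exp (-u ^ 2) := by
    have hunion : Set.Ioc 0 b ∪ Set.Ioi b = Set.Ioi (0:ℝ) := Set.Ioc_union_Ioi_eq_Ioi hb
    have hsplit := MeasureTheory.setIntegral_union (f := fun s : ℝ => Real.exp (-s ^ 2))
      (μ := volume) (s := Set.Ioc 0 b) (t := Set.Ioi b) (Set.Ioc_disjoint_Ioi le_rfl) measurableSet_Ioi
      exp_neg_sq_integrable.integrableOn exp_neg_sq_integrable.integrableOn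
    rw [hunion] at hsplit
    have hIoi0 : ∫ s in Set.Ioi (0:ℝ), Real.exp (-s ^ 2) = Real.sqrt Real.pi / 2 := by
      have := integral_gaussian_Ioi (1:ℝ)
      simpa using this
    rw [hIoi0] at hsplit
    rw [intervalIntegral.integral_of_le hb]
    linarith [hsplit]
  rw [Erfc, hIoi]
  rw [hsub] at hftc
  -- final algebra
  have hπ : (0:ℝ) < Real.pi := Real.pi_pos
  have hsπ : (0:ℝ) < Real.sqrt Real.pi := Real.sqrt_pos.2 hπ
  have hexp : Real.exp (-(a ^ 2 / 2)) * Real.exp (a ^ 2 / 2) = 1 := by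
    rw [← Real.exp_add]; norm_num
  have hsqpi : Real.sqrt Real.pi * Real.sqrt Real.pi = Real.pi :=
    Real.mul_self_sqrt hπ.le
  set j := ∫ u in (0:ℝ)..b, Real.exp (-u ^ 2)
  have hkey : Real.sqrt 2 * Real.sqrt Real.pi * (Real.sqrt 2 * j)
      = 2 * (Real.sqrt Real.pi * j) := by
    rw [show Real.sqrt 2 * Real.sqrt Real.pi * (Real.sqrt 2 * j)
      = Real.sqrt 2 * Real.sqrt 2 * (Real.sqrt Real.pi * j) by ring,
      Real.mul_self_sqrt (by norm_num : (0:ℝ) ≤ 2)]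
  rw [hkey] at hftc
  have hJ : Real.exp (-(a ^ 2 / 2)) * Jf a = Real.pi - 2 * (Real.sqrt Real.pi * j) := by
    linarith
  have hfin := congrArg (fun z => Real.exp (a ^ 2 / 2) * z) hJ
  rw [← mul_assoc, mul_comm (Real.exp (a ^ 2 / 2)) (Real.exp (-(a ^ 2 / 2))), hexp, one_mul]
    at hfin
  rw [hfin]
  field_simp
  ring_nf
  rw [Real.sq_sqrt hπ.le]

lemma gauss_cauchy {a : ℝ} (ha : 0 < a) :
    ∫ x : ℝ, 1 / (a ^ 2 + x ^ 2) ∂(gaussianReal 0 1)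
      = Real.sqrt (Real.pi / 2) / a * Real.exp (a ^ 2 / 2) * Erfc (a / Real.sqrt 2) := by
  have h1 : ∫ x : ℝ, 1 / (a ^ 2 + x ^ 2) ∂(gaussianReal 0 1)
      = ∫ x : ℝ, gaussianPDFReal 0 1 x * (1 / (a ^ 2 + x ^ 2)) := by
    rw [gaussianReal_of_var_ne_zero 0 one_ne_zero]
    rw [show (gaussianPDF 0 1)
      = fun x => (((gaussianPDFReal 0 1 x).toNNReal : NNReal) : ENNReal) from rfl]
    rw [integral_withDensity_eq_integral_smul
      ((measurable_gaussianPDFReal 0 1).real_toNNReal) (fun x => 1 / (a ^ 2 + x ^ 2))]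
    congr 1
    ext x
    rw [NNReal.smul_def, smul_eq_mul, Real.coe_toNNReal _ (gaussianPDFReal_nonneg 0 1 x)]
  have hpdf : ∀ x : ℝ, gaussianPDFReal 0 1 x
      = (Real.sqrt (2 * Real.pi))⁻¹ * Real.exp (-(x ^ 2 / 2)) := by
    intro x
    rw [gaussianPDFReal]
    push_cast
    norm_num
    left
    ring_nf
  rw [h1]
  simp_rw [hpdf, mul_assoc]
  rw [integral_const_mul]
  have hsub : ∫ x : ℝ, Real.exp (-(x ^ 2 / 2)) * (1 / (a ^ 2 + x ^ 2))
      = a * ((1 / a ^ 2) * Jf a) := by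
    have hc := MeasureTheory.Measure.integral_comp_mul_left
      (fun x : ℝ => Real.exp (-(x ^ 2 / 2)) * (1 / (a ^ 2 + x ^ 2))) a
    rw [abs_of_pos (inv_pos.2 ha), smul_eq_mul] at hc
    have heq : ∀ t : ℝ, Real.exp (-((a * t) ^ 2 / 2)) * (1 / (a ^ 2 + (a * t) ^ 2))
        = (1 / a ^ 2) * (Real.exp (-(a ^ 2 / 2) * t ^ 2) / (1 + t ^ 2)) := by
      intro t
      have h2 : a ^ 2 + (a * t) ^ 2 = a ^ 2 * (1 + t ^ 2) := by ring
      have h3 : (0:ℝ) < 1 + t ^ 2 := by positivity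
      rw [h2]
      rw [show -((a * t) ^ 2 / 2) = -(a ^ 2 / 2) * t ^ 2 by ring]
      field_simp
    simp_rw [heq] at hc
    rw [integral_const_mul] at hc
    rw [Jf, hc, ← mul_assoc, mul_inv_cancel₀ ha.ne', one_mul]
  rw [hsub, Jf_eq ha.le]
  have hkey : Real.sqrt (2 * Real.pi) * Real.sqrt (Real.pi / 2) = Real.pi := by
    rw [← Real.sqrt_mul (by positivity), show (2 * Real.pi) * (Real.pi / 2) = Real.pi ^ 2 by ring,
      Real.sqrt_sq Real.pi_pos.le]
  have hs2π : (0:ℝ) < Real.sqrt (2 * Real.pi) := Real.sqrt_pos.2 (by positivity)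
  have hsqpi : Real.sqrt Real.pi * Real.sqrt Real.pi = Real.pi :=
    Real.mul_self_sqrt Real.pi_pos.le
  field_simp
  linear_combination (-Erfc (a / Real.sqrt 2)) * hkey

set_option maxHeartbeats 2000000 in
theorem stmt_14 (n T σ α : ℝ) (hn : 0 < n) (hT : 0 < T) (hσ : 0 < σ) (hα : 0 < α)
    (h : T > 2 * n) :
    ∫ x : ℝ, (1 / ((T - 2 * n) / (σ ^ 2 + α ^ 2 * (2 * σ ^ 2 / n) * x ^ 2) +
        2 * n / σ ^ 2)) ∂(gaussianReal 0 1) =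
      σ ^ 2 / (2 * n) -
        (σ ^ 2 / (4 * α ^ 2)) * (((T - 2 * n) / n) / 2) *
          Real.exp (T / (8 * α ^ 2)) * Erfc (Real.sqrt (T / (8 * α ^ 2))) *
          Real.sqrt (Real.pi / (T / (2 * α ^ 2))) := by
  set a : ℝ := Real.sqrt T / (2 * α) with ha_def
  have ha : 0 < a := div_pos (Real.sqrt_pos.2 hT) (by positivity)
  have ha2 : a ^ 2 = T / (4 * α ^ 2) := by
    rw [ha_def, div_pow, Real.sq_sqrt hT.le]
    ring_nf
  have hexp : a ^ 2 / 2 = T / (8 * α ^ 2) := by rw [ha2]; ring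
  have hsqrt2 : Real.sqrt (a ^ 2 / 2) = a / Real.sqrt 2 := by
    rw [Real.sqrt_div (sq_nonneg a), Real.sqrt_sq ha.le]
  have hsq : Real.sqrt (Real.pi / (T / (2 * α ^ 2))) = Real.sqrt (Real.pi / 2) / a := by
    have hpi2 : (Real.sqrt (Real.pi / 2) / a) ^ 2 = Real.pi / (T / (2 * α ^ 2)) := by
      rw [div_pow, Real.sq_sqrt (by positivity : (0:ℝ) ≤ Real.pi / 2), ha2]
      field_simp
      ring
    rw [← hpi2, Real.sqrt_sq (by positivity)]
  set c : ℝ := σ ^ 2 * (T - 2 * n) / (8 * n * α ^ 2) with hc_def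
  have hpt : ∀ x : ℝ, 1 / ((T - 2 * n) / (σ ^ 2 + α ^ 2 * (2 * σ ^ 2 / n) * x ^ 2) +
      2 * n / σ ^ 2) = σ ^ 2 / (2 * n) - c * (1 / (a ^ 2 + x ^ 2)) := by
    intro x
    rw [ha2, hc_def]
    have h1 : (0:ℝ) < σ ^ 2 + α ^ 2 * (2 * σ ^ 2 / n) * x ^ 2 := by positivity
    have h2 : (0:ℝ) < T / (4 * α ^ 2) + x ^ 2 := by positivity
    have h3 : (0:ℝ) < (T - 2 * n) / (σ ^ 2 + α ^ 2 * (2 * σ ^ 2 / n) * x ^ 2) +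
        2 * n / σ ^ 2 := by
      have : (0:ℝ) < (T - 2 * n) / (σ ^ 2 + α ^ 2 * (2 * σ ^ 2 / n) * x ^ 2) :=
        div_pos (by linarith) h1
      have h4 : (0:ℝ) < 2 * n / σ ^ 2 := by positivity
      linarith
    have hσ2 : (σ:ℝ) ^ 2 ≠ 0 := by positivity
    have h2n : (2 * n : ℝ) ≠ 0 := by positivity
    have hQ : (0:ℝ) < (T - 2 * n) * σ ^ 2 + (σ ^ 2 + α ^ 2 * (2 * σ ^ 2 / n) * x ^ 2) * (2 * n) := by
      have hP : (0:ℝ) ≤ α ^ 2 * (2 * σ ^ 2 / n) * x ^ 2 := by positivity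
      nlinarith [sq_nonneg σ]
    have hden : (0:ℝ) < 2 * n * (T / (4 * α ^ 2) + x ^ 2) := by positivity
    rw [div_add_div _ _ h1.ne' hσ2, one_div_div, mul_one_div,
      div_sub_div _ _ h2n h2.ne', div_eq_div_iff hQ.ne' hden.ne']
    field_simp
    ring
  simp_rw [hpt]
  have hint : Integrable (fun x : ℝ => 1 / (a ^ 2 + x ^ 2)) (gaussianReal 0 1) := by
    refine (integrable_const ((a ^ 2)⁻¹)).mono' ?_ ?_
    · exact (Continuous.div (by continuity) (by continuity)
        (fun x => by positivity)).aestronglyMeasurable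
    · refine Filter.Eventually.of_forall fun x => ?_
      have h1 : (0:ℝ) < a ^ 2 + x ^ 2 := by positivity
      rw [Real.norm_eq_abs, abs_of_pos (by positivity : (0:ℝ) < 1 / (a ^ 2 + x ^ 2))]
      rw [div_le_iff₀ h1]
      have ha2p : (0:ℝ) < a ^ 2 := by positivity
      nlinarith [mul_inv_cancel₀ ha2p.ne', mul_nonneg (inv_pos.2 ha2p).le (sq_nonneg x)]
  rw [integral_sub (integrable_const _) (hint.const_mul c), integral_const,
    integral_const_mul, gauss_cauchy ha]
  simp only [measure_univ, ENNReal.toReal_one, probReal_univ, smul_eq_mul, one_mul]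
  rw [← hexp] at *
  rw [show Real.sqrt (a ^ 2 / 2) = a / Real.sqrt 2 from hsqrt2, hsq, hc_def]
  ring
end

section
/- Let L > 0 and let F₁(e) = 1/( m/(σ² + β²·e²) + k ) for constants m, σ, β, k > 0, and F₂(e) = (1/√(2π))·exp(−e²/2). Then for all a ∈ ℝ: ∫_ℝ F₁(e)·F₂(e) de ≤ ∫_ℝ F₁(e + a)·F₂(e) de. -/
open Real MeasureTheory Set

noncomputable def phi (e : ℝ) : ℝ := (1 / Real.sqrt (2 * Real.pi)) * Real.exp (-e ^ 2 / 2)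

lemma phi_nonneg (e : ℝ) : 0 ≤ phi e := by unfold phi; positivity

lemma phi_cont : Continuous phi := by unfold phi; fun_prop

lemma phi_integrable : Integrable phi := by
  have h : Integrable fun x : ℝ => Real.exp (-(1/2) * x ^ 2) :=
    integrable_exp_neg_mul_sq (by norm_num)
  have := h.const_mul (1 / Real.sqrt (2 * Real.pi))
  convert this using 2 with e
  unfold phi; ring_nf

lemma exp_Ioi (c : ℝ) (hc : 0 < c) : ∫ t in Ioi (0:ℝ), Real.exp (-(c * t)) = 1 / c := by
  have h := integral_comp_mul_right_Ioi (fun x => Real.exp (-x)) 0 hc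
  simp only [zero_mul, integral_exp_neg_Ioi, neg_zero, Real.exp_zero, smul_eq_mul, mul_one] at h
  calc ∫ t in Ioi (0:ℝ), Real.exp (-(c * t)) = ∫ t in Ioi (0:ℝ), Real.exp (-(t * c)) := by
        simp_rw [mul_comm]
    _ = 1 / c := by rw [h]; rw [one_div]

lemma exp_t_integrable (c : ℝ) (hc : 0 < c) :
    IntegrableOn (fun t : ℝ => Real.exp (-(c * t))) (Ioi 0) := by
  simpa [neg_mul] using exp_neg_integrableOn_Ioi 0 hc

lemma intg (C a : ℝ) (hC : 0 < C) :
    Integrable fun e : ℝ => phi e * (1 / (C + (e + a) ^ 2)) := by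
  have hg : Integrable fun e : ℝ => phi e * (1 / C) := phi_integrable.mul_const _
  refine hg.mono ?_ ?_
  · refine Continuous.aestronglyMeasurable ?_
    refine phi_cont.mul (Continuous.div continuous_const (by fun_prop) fun e => ?_)
    positivity
  · refine Filter.Eventually.of_forall fun e => ?_
    have h1 : (0:ℝ) < C + (e + a) ^ 2 := by positivity
    rw [Real.norm_eq_abs, Real.norm_eq_abs, abs_of_nonneg (mul_nonneg (phi_nonneg e) (by positivity)),
      abs_of_nonneg (mul_nonneg (phi_nonneg e) (by positivity))]
    have : 1 / (C + (e + a) ^ 2) ≤ 1 / C := by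
      apply one_div_le_one_div_of_le hC; nlinarith
    exact mul_le_mul_of_nonneg_left this (phi_nonneg e)

lemma inner_formula (C a t : ℝ) (ht : 0 ≤ t) :
    ∫ e : ℝ, phi e * Real.exp (-((C + (e + a) ^ 2) * t))
      = Real.exp (-(C * t) - (t * a ^ 2 / 2) / (1/2 + t)) *
        ∫ e : ℝ, (1 / Real.sqrt (2 * Real.pi)) * Real.exp (-((1/2 + t) * e ^ 2)) := by
  have hs : (0:ℝ) < 1/2 + t := by linarith
  have hpt : ∀ e : ℝ, phi e * Real.exp (-((C + (e + a) ^ 2) * t))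
      = Real.exp (-(C * t) - (t * a ^ 2 / 2) / (1/2 + t)) *
        ((1 / Real.sqrt (2 * Real.pi)) *
          Real.exp (-((1/2 + t) * (e + t * a / (1/2 + t)) ^ 2))) := by
    intro e
    have hexp : -e ^ 2/2 + -((C + (e + a) ^ 2) * t)
        = (-(C * t) - (t * a ^ 2 / 2) / (1/2 + t))
          + -((1/2 + t) * (e + t * a / (1/2 + t)) ^ 2) := by
      field_simp
      ring
    calc phi e * Real.exp (-((C + (e + a) ^ 2) * t))
        = (1 / Real.sqrt (2 * Real.pi)) * Real.exp (-e ^ 2/2 + -((C + (e + a) ^ 2) * t)) := by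
          unfold phi; rw [mul_assoc, Real.exp_add]
      _ = _ := by rw [hexp, Real.exp_add]; ring
  simp_rw [hpt]
  rw [integral_const_mul]
  congr 1
  exact integral_add_right_eq_self
    (fun e => (1 / Real.sqrt (2 * Real.pi)) * Real.exp (-((1/2 + t) * e ^ 2))) _

lemma prod_int (C a : ℝ) (hC : 0 < C) :
    Integrable (Function.uncurry fun e t : ℝ => phi e * Real.exp (-((C + (e + a) ^ 2) * t)))
      (volume.prod (volume.restrict (Ioi 0))) := by
  have hmeas : AEStronglyMeasurable
      (Function.uncurry fun e t : ℝ => phi e * Real.exp (-((C + (e + a) ^ 2) * t)))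
      (volume.prod (volume.restrict (Ioi 0))) := by
    apply Continuous.aestronglyMeasurable
    apply Continuous.mul (phi_cont.comp continuous_fst)
    fun_prop
  rw [integrable_prod_iff hmeas]
  constructor
  · refine Filter.Eventually.of_forall fun e => ?_
    simp only [Function.uncurry_apply_pair]
    exact ((exp_t_integrable (C + (e + a) ^ 2) (by positivity)).const_mul (phi e))
  · have heq : (fun e : ℝ => ∫ t in Ioi (0:ℝ),
        ‖phi e * Real.exp (-((C + (e + a) ^ 2) * t))‖)
        = fun e : ℝ => phi e * (1 / (C + (e + a) ^ 2)) := by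
      funext e
      have h1 : (0:ℝ) < C + (e + a) ^ 2 := by positivity
      calc ∫ t in Ioi (0:ℝ), ‖phi e * Real.exp (-((C + (e + a) ^ 2) * t))‖
          = ∫ t in Ioi (0:ℝ), phi e * Real.exp (-((C + (e + a) ^ 2) * t)) := by
            refine integral_congr_ae (Filter.Eventually.of_forall fun t => ?_)
            exact norm_of_nonneg (mul_nonneg (phi_nonneg e) (Real.exp_nonneg _))
        _ = phi e * (1 / (C + (e + a) ^ 2)) := by
            rw [integral_const_mul, exp_Ioi _ h1]
    simp only [Function.uncurry_apply_pair]
    rw [heq]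
    exact intg C a hC

lemma key (C : ℝ) (hC : 0 < C) (a : ℝ) :
    ∫ e : ℝ, phi e * (1 / (C + (e + a) ^ 2)) ≤ ∫ e : ℝ, phi e * (1 / (C + e ^ 2)) := by
  have h1 : ∀ b : ℝ, (∫ e : ℝ, phi e * (1 / (C + (e + b) ^ 2)))
      = ∫ t in Ioi (0:ℝ), ∫ e : ℝ, phi e * Real.exp (-((C + (e + b) ^ 2) * t)) := by
    intro b
    rw [← integral_integral_swap (prod_int C b hC)]
    refine integral_congr_ae (Filter.Eventually.of_forall fun e => ?_)
    have hpos : (0:ℝ) < C + (e + b) ^ 2 := by positivity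
    dsimp only
    rw [integral_const_mul, exp_Ioi _ hpos]
  have h2 : (∫ e : ℝ, phi e * (1 / (C + e ^ 2)))
      = ∫ t in Ioi (0:ℝ), ∫ e : ℝ, phi e * Real.exp (-((C + e ^ 2) * t)) := by
    have := h1 0
    simpa using this
  rw [h1 a, h2]
  refine setIntegral_mono_on ?_ ?_ measurableSet_Ioi ?_
  · exact (prod_int C a hC).integral_prod_right
  · have h := (prod_int C 0 hC).integral_prod_right
    simpa [IntegrableOn] using h
  · intro t ht
    have ht' : (0:ℝ) ≤ t := le_of_lt ht
    have h0 : (∫ e : ℝ, phi e * Real.exp (-((C + e ^ 2) * t)))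
        = Real.exp (-(C * t)) *
          ∫ e : ℝ, (1 / Real.sqrt (2 * Real.pi)) * Real.exp (-((1/2 + t) * e ^ 2)) := by
      have := inner_formula C 0 t ht'
      simpa using this
    rw [inner_formula C a t ht', h0]
    have hK : (0:ℝ) ≤ ∫ e : ℝ, (1 / Real.sqrt (2 * Real.pi)) * Real.exp (-((1/2 + t) * e ^ 2)) :=
      integral_nonneg fun e => by positivity
    refine mul_le_mul_of_nonneg_right ?_ hK
    apply Real.exp_le_exp.2
    have hs : (0:ℝ) < 1/2 + t := by linarith
    have : 0 ≤ (t * a ^ 2 / 2) / (1/2 + t) := by positivity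
    linarith

lemma decomp (m σ β k : ℝ) (hm : 0 < m) (hσ : 0 < σ) (hβ : 0 < β) (hk : 0 < k) (b : ℝ) :
    (∫ e : ℝ, (1 / (m / (σ ^ 2 + β ^ 2 * (e + b) ^ 2) + k)) * phi e)
      = (1/k) * (∫ e : ℝ, phi e)
        - (m/(k^2*β^2)) * ∫ e : ℝ, phi e * (1 / ((m+k*σ^2)/(k*β^2) + (e + b) ^ 2)) := by
  have hC : (0:ℝ) < (m+k*σ^2)/(k*β^2) := by positivity
  have hpt : ∀ e : ℝ, (1 / (m / (σ ^ 2 + β ^ 2 * (e + b) ^ 2) + k)) * phi e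
      = (1/k) * phi e - (m/(k^2*β^2)) * (phi e * (1 / ((m+k*σ^2)/(k*β^2) + (e + b) ^ 2))) := by
    intro e
    have h1 : (0:ℝ) < σ ^ 2 + β ^ 2 * (e+b) ^ 2 := by positivity
    have h2 : (0:ℝ) < m / (σ ^ 2 + β ^ 2 * (e+b) ^ 2) + k := by positivity
    have h3 : (0:ℝ) < (m+k*σ^2)/(k*β^2) + (e+b)^2 := by positivity
    field_simp
    ring
  simp_rw [hpt]
  rw [integral_sub (phi_integrable.const_mul _) ((intg _ b hC).const_mul _),
    integral_const_mul, integral_const_mul]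

theorem stmt_19 (m σ β k : ℝ) (hm : 0 < m) (hσ : 0 < σ) (hβ : 0 < β) (hk : 0 < k)
    (a : ℝ) :
    (∫ e : ℝ, (1 / (m / (σ ^ 2 + β ^ 2 * e ^ 2) + k)) *
        ((1 / Real.sqrt (2 * Real.pi)) * Real.exp (-e ^ 2 / 2))) ≤
    ∫ e : ℝ, (1 / (m / (σ ^ 2 + β ^ 2 * (e + a) ^ 2) + k)) *
        ((1 / Real.sqrt (2 * Real.pi)) * Real.exp (-e ^ 2 / 2)) := by
  have hC : (0:ℝ) < (m+k*σ^2)/(k*β^2) := by positivity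
  have hL : (∫ e : ℝ, (1 / (m / (σ ^ 2 + β ^ 2 * e ^ 2) + k)) *
        ((1 / Real.sqrt (2 * Real.pi)) * Real.exp (-e ^ 2 / 2)))
      = (1/k) * (∫ e : ℝ, phi e)
        - (m/(k^2*β^2)) * ∫ e : ℝ, phi e * (1 / ((m+k*σ^2)/(k*β^2) + e ^ 2)) := by
    have := decomp m σ β k hm hσ hβ hk 0
    simpa [phi] using this
  have hR : (∫ e : ℝ, (1 / (m / (σ ^ 2 + β ^ 2 * (e + a) ^ 2) + k)) *
        ((1 / Real.sqrt (2 * Real.pi)) * Real.exp (-e ^ 2 / 2)))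
      = (1/k) * (∫ e : ℝ, phi e)
        - (m/(k^2*β^2)) * ∫ e : ℝ, phi e * (1 / ((m+k*σ^2)/(k*β^2) + (e + a) ^ 2)) := by
    have := decomp m σ β k hm hσ hβ hk a
    simpa [phi] using this
  rw [hL, hR]
  have hkey := key _ hC a
  have hB : (0:ℝ) ≤ m/(k^2*β^2) := by positivity
  nlinarith [mul_le_mul_of_nonneg_left hkey hB]
end
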